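/- arXiv:2407.11175 — 10 statements merged into one kernel-verified Lean document; each statement's English description precedes it below -/
import Mathlib

section
/- Let A, B, p0, p5 be integers and let p1, p2, p3, p4 ∈ {1, −1}. Suppose (p_n)_{n≥0} is a sequence of rational numbers with these initial values which satisfies the trilinear Boussinesq recurrence p_{n+6} = −(A·p_{n+1}·p_{n+3}·p_{n+5} + B·p_{n+2}·p_{n+3}·p_{n+4} + p_n·p_{n+4}·p_{n+5})/(p_{n+1}·p_{n+2}) for all n ≥ 0, and that p_{n+1}·p_{n+2} ≠ 0 at every step (so the sequence is well defined). Then every term p_n is an integer. -/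
/-!
Along a solution of the Boussinesq recurrence the quantity
`(p n * p (n + 4) + A * p (n + 1) * p (n + 3)) / p (n + 2) ^ 2` is 3-periodic, so `n ↦ p (n + 1)`
satisfies a Somos-4 recurrence `s n * s (n + 4) = β n * s (n + 2) ^ 2 - A * s (n + 1) * s (n + 3)`
with 3-periodic coefficients, which are integers because `p 1, …, p 4 = ±1`.

Such sequences have the Laurent property. Over `ℤ[α, β₀, β₁, β₂]` the generic sequence
with unit initial values stays polynomial: four consecutive relations make `s (k + 4)` divide
`s (k + 1) * s (k + 2) ^ 2 * s (k + 3)` times the numerator of `s (k + 8)`, and `s (k + 4)` is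
coprime to those three factors. Coprimality of terms at distance at most 3 propagates through the
recurrence because no term is divisible by `α` or by a `βᵢ`, as one sees by setting the `βᵢ`
(resp. `α`) to zero. Every rational solution is a specialization of the generic one.
-/

open MvPolynomial

section ExactDiv

variable {R : Type*} [CommRing R]

open Classical in
noncomputable def exactDiv (x y : R) : R := if h : y ∣ x then h.choose else 0

theorem mul_exactDiv {x y : R} (h : y ∣ x) : y * exactDiv x y = x := by
  classical
  rw [exactDiv, dif_pos h]
  exact h.choose_spec.symm

end ExactDiv

theorem IsRelPrime.of_mul_eq_add_mul {R : Type*} [CommRing R] {x y z w t : R}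
    (heq : z * w = y + x * t) (h : IsRelPrime x y) : IsRelPrime x w :=
  (heq ▸ h.add_mul_left_right t).of_mul_right_right

section Somos4Relation

variable {R : Type*} [CommRing R]

def Somos4.rhs (α : R) (β : ℕ → R) (s : ℕ → R) (n : ℕ) : R :=
  β n * s (n + 2) ^ 2 + α * s (n + 1) * s (n + 3)

def IsSomos4 (α : R) (β : ℕ → R) (s : ℕ → R) : Prop :=
  ∀ n, s n * s (n + 4) = Somos4.rhs α β s n

open Somos4

variable {α : R} {β : ℕ → R} {s : ℕ → R}

theorem IsSomos4.map {S : Type*} [CommRing S] (h : IsSomos4 α β s) (f : R →+* S) {α' : S}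
    {β' : ℕ → S} (hα : f α = α') (hβ : ∀ n, f (β n) = β' n) :
    IsSomos4 α' β' (fun n => f (s n)) := fun n => by
  simpa [rhs, hα, hβ] using congrArg f (h n)

theorem IsSomos4.eq [IsDomain R] {t : ℕ → R} (hs : IsSomos4 α β s) (ht : IsSomos4 α β t)
    (hne : ∀ n, s n ≠ 0) (h : ∀ n < 4, s n = t n) : s = t := by
  funext n
  induction n using Nat.strong_induction_on with
  | _ n ih =>
    rcases lt_or_ge n 4 with hn | hn
    · exact h n hn
    obtain ⟨k, rfl⟩ := Nat.exists_eq_add_of_le' hn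
    refine mul_left_cancel₀ (hne k) ?_
    calc s k * s (k + 4) = rhs α β s k := hs k
      _ = rhs α β t k := by simp only [rhs, ih (k + 1) (by omega), ih (k + 2) (by omega),
          ih (k + 3) (by omega)]
      _ = t k * t (k + 4) := (ht k).symm
      _ = s k * t (k + 4) := by rw [ih k (by omega)]

theorem Somos4.dvd_mul_rhs (hβ : Function.Periodic β 3) {k : ℕ}
    (h : ∀ j < 4, s (k + j) * s (k + j + 4) = rhs α β s (k + j)) :
    s (k + 4) ∣ s (k + 1) * s (k + 2) ^ 2 * s (k + 3) * rhs α β s (k + 4) := by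
  have r0 := h 0 (by norm_num)
  have r1 := h 1 (by norm_num)
  have r2 := h 2 (by norm_num)
  have r3 := h 3 (by norm_num)
  simp only [rhs, add_assoc, Nat.reduceAdd, add_zero] at r0 r1 r2 r3 ⊢
  rw [hβ k] at r3
  rw [show β (k + 4) = β (k + 1) from hβ (k + 1)]
  refine ⟨α * β (k + 1) * s k * s (k + 3) ^ 2 * s (k + 5) ^ 2
      + β (k + 1) * s (k + 1) * s (k + 3) *
        (β (k + 2) ^ 2 * s (k + 4) ^ 3 + 2 * α * β (k + 2) * s (k + 4) * s (k + 3) * s (k + 5))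
      + α * s (k + 2) ^ 2 *
        (α * β (k + 1) * s (k + 3) ^ 2 * s (k + 6) + α * β k * s (k + 2) * s (k + 5) ^ 2
          + α ^ 2 * s (k + 2) * s (k + 4) * s (k + 6)), ?_⟩
  linear_combination (α * s (k + 2) ^ 2 * s (k + 1) * s (k + 5)) * r3
    + (β (k + 1) * s (k + 1) * s (k + 3) *
        (s (k + 2) * s (k + 6) + β (k + 2) * s (k + 4) ^ 2 + α * s (k + 3) * s (k + 5))) * r2
    + (α * s (k + 2) ^ 2 * (β k * s (k + 5) ^ 2 + α * s (k + 4) * s (k + 6))) * r1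
    - (β (k + 1) * α * s (k + 3) ^ 2 * s (k + 5) ^ 2) * r0

end Somos4Relation

namespace Somos4

/-- Coefficients of the generic Somos-4 sequence: `X none` is `α` and `X (some i)` is the
coefficient `β n` for `n ≡ i [MOD 3]`. -/
abbrev Coeffs := MvPolynomial (Option (ZMod 3)) ℤ

noncomputable def genα : Coeffs := X none

noncomputable def genβ (n : ℕ) : Coeffs := X (some n)

theorem genβ_periodic : Function.Periodic genβ 3 := fun n => by
  simp only [genβ, Nat.cast_add, ZMod.natCast_self, add_zero]

noncomputable def generic (u : Fin 4 → ℤˣ) : ℕ → Coeffs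
  | 0 => C (u 0 : ℤ)
  | 1 => C (u 1 : ℤ)
  | 2 => C (u 2 : ℤ)
  | 3 => C (u 3 : ℤ)
  | n + 4 =>
    exactDiv (genβ n * generic u (n + 2) ^ 2 + genα * generic u (n + 1) * generic u (n + 3))
      (generic u n)

variable (u : Fin 4 → ℤˣ)

theorem generic_add_four (n : ℕ) :
    generic u (n + 4) = exactDiv (rhs genα genβ (generic u) n) (generic u n) := rfl

theorem isUnit_generic {n : ℕ} (hn : n < 4) : IsUnit (generic u n) := by
  interval_cases n <;> exact (u _).isUnit.map C

noncomputable def setβZero : Coeffs →ₐ[ℤ] Polynomial ℤ :=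
  aeval fun i => i.elim Polynomial.X 0

noncomputable def setαZero : Coeffs →ₐ[ℤ] MvPolynomial (ZMod 3) ℤ :=
  aeval fun i => i.elim 0 X

@[simp] theorem setβZero_genα : setβZero genα = Polynomial.X := by simp [setβZero, genα]

@[simp] theorem setβZero_genβ (n : ℕ) : setβZero (genβ n) = 0 := by simp [setβZero, genβ]

@[simp] theorem setαZero_genα : setαZero genα = 0 := by simp [setαZero, genα]

@[simp] theorem setαZero_genβ (n : ℕ) : setαZero (genβ n) = X (n : ZMod 3) := by
  simp [setαZero, genβ]

theorem isRelPrime_genβ {x : Coeffs} (hx : setβZero x ≠ 0) (n : ℕ) :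
    IsRelPrime (genβ n) x := by
  refine (show Prime (genβ n) from X_prime).irreducible.isRelPrime_iff_not_dvd.mpr
    fun ⟨y, hy⟩ => hx ?_
  rw [hy, map_mul, setβZero_genβ, zero_mul]

theorem isRelPrime_genα {x : Coeffs} (hx : setαZero x ≠ 0) : IsRelPrime genα x := by
  refine (show Prime genα from X_prime).irreducible.isRelPrime_iff_not_dvd.mpr
    fun ⟨y, hy⟩ => hx ?_
  rw [hy, map_mul, setαZero_genα, zero_mul]

structure GoodUpTo (N : ℕ) : Prop where
  rel : ∀ k, k + 4 < N → generic u k * generic u (k + 4) = rhs genα genβ (generic u) k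
  setβZero_ne : ∀ m < N, setβZero (generic u m) ≠ 0
  setαZero_ne : ∀ m < N, setαZero (generic u m) ≠ 0
  isRelPrime : ∀ i j, i < j → j < N → j ≤ i + 3 → IsRelPrime (generic u i) (generic u j)

variable {u}

theorem goodUpTo_of_le_four {N : ℕ} (hN : N ≤ 4) : GoodUpTo u N where
  rel k hk := by omega
  setβZero_ne m hm := ((isUnit_generic u (by omega)).map _).ne_zero
  setαZero_ne m hm := ((isUnit_generic u (by omega)).map _).ne_zero
  isRelPrime i j hij hj _ := (isUnit_generic u (by omega)).isRelPrime_left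

theorem GoodUpTo.dvd_rhs {n : ℕ} (h : GoodUpTo u (n + 4)) :
    generic u n ∣ rhs genα genβ (generic u) n := by
  rcases lt_or_ge n 4 with hn | hn
  · exact (isUnit_generic u hn).dvd
  obtain ⟨k, rfl⟩ := Nat.exists_eq_add_of_le' hn
  have hdvd := dvd_mul_rhs genβ_periodic fun j hj => h.rel (k + j) (by omega)
  have h1 := h.isRelPrime (k + 1) (k + 4) (by omega) (by omega) (by omega)
  have h2 := h.isRelPrime (k + 2) (k + 4) (by omega) (by omega) (by omega)
  have h3 := h.isRelPrime (k + 3) (k + 4) (by omega) (by omega) (by omega)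
  exact h3.symm.dvd_of_dvd_mul_left <| (h2.symm.pow_right.dvd_of_dvd_mul_left <|
    h1.symm.dvd_of_dvd_mul_left <| by simpa only [mul_assoc] using hdvd)

theorem GoodUpTo.rel_self {n : ℕ} (h : GoodUpTo u (n + 4)) :
    generic u n * generic u (n + 4) = rhs genα genβ (generic u) n := by
  rw [generic_add_four]
  exact mul_exactDiv h.dvd_rhs

theorem GoodUpTo.setβZero_ne_add_four {n : ℕ} (h : GoodUpTo u (n + 4)) :
    setβZero (generic u (n + 4)) ≠ 0 := by
  intro h0
  have := congrArg setβZero h.rel_self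
  simp only [rhs, map_add, map_mul, map_pow, setβZero_genα, setβZero_genβ, h0, mul_zero,
    zero_mul, zero_add] at this
  exact mul_ne_zero (mul_ne_zero Polynomial.X_ne_zero (h.setβZero_ne (n + 1) (by omega)))
    (h.setβZero_ne (n + 3) (by omega)) this.symm

theorem GoodUpTo.setαZero_ne_add_four {n : ℕ} (h : GoodUpTo u (n + 4)) :
    setαZero (generic u (n + 4)) ≠ 0 := by
  intro h0
  have := congrArg setαZero h.rel_self
  simp only [rhs, map_add, map_mul, map_pow, setαZero_genα, setαZero_genβ, h0, mul_zero,
    zero_mul, add_zero] at this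
  exact mul_ne_zero (X_ne_zero _) (pow_ne_zero 2 (h.setαZero_ne (n + 2) (by omega))) this.symm

theorem GoodUpTo.isRelPrime_add_four {n i : ℕ} (h : GoodUpTo u (n + 4)) (hni : n < i)
    (hin : i < n + 4) : IsRelPrime (generic u i) (generic u (n + 4)) := by
  have hrel := h.rel_self
  unfold rhs at hrel
  obtain rfl | rfl | rfl : i = n + 1 ∨ i = n + 2 ∨ i = n + 3 := by omega
  · have key : generic u n * generic u (n + 4) =
        genβ n * generic u (n + 2) ^ 2 + generic u (n + 1) * (genα * generic u (n + 3)) := by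
      rw [hrel]; ring
    exact .of_mul_eq_add_mul key <|
      (isRelPrime_genβ (h.setβZero_ne _ (by omega)) n).symm.mul_right
        (h.isRelPrime (n + 1) (n + 2) (by omega) (by omega) (by omega)).pow_right
  · have key : generic u n * generic u (n + 4) =
        genα * generic u (n + 1) * generic u (n + 3) +
          generic u (n + 2) * (genβ n * generic u (n + 2)) := by
      rw [hrel]; ring
    exact .of_mul_eq_add_mul key <|
      ((isRelPrime_genα (h.setαZero_ne _ (by omega))).symm.mul_right
        (h.isRelPrime (n + 1) (n + 2) (by omega) (by omega) (by omega)).symm).mul_right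
        (h.isRelPrime (n + 2) (n + 3) (by omega) (by omega) (by omega))
  · have key : generic u n * generic u (n + 4) =
        genβ n * generic u (n + 2) ^ 2 + generic u (n + 3) * (genα * generic u (n + 1)) := by
      rw [hrel]; ring
    exact .of_mul_eq_add_mul key <|
      (isRelPrime_genβ (h.setβZero_ne _ (by omega)) n).symm.mul_right
        (h.isRelPrime (n + 2) (n + 3) (by omega) (by omega) (by omega)).symm.pow_right

theorem GoodUpTo.succ {n : ℕ} (h : GoodUpTo u (n + 4)) : GoodUpTo u (n + 5) := by
  refine ⟨fun k hk => ?_, fun m hm => ?_, fun m hm => ?_, fun i j hij hj hji => ?_⟩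
  · obtain hk | rfl : k < n ∨ k = n := by omega
    · exact h.rel k (by omega)
    · exact h.rel_self
  · obtain hm | rfl : m < n + 4 ∨ m = n + 4 := by omega
    · exact h.setβZero_ne m hm
    · exact h.setβZero_ne_add_four
  · obtain hm | rfl : m < n + 4 ∨ m = n + 4 := by omega
    · exact h.setαZero_ne m hm
    · exact h.setαZero_ne_add_four
  · obtain hj | rfl : j < n + 4 ∨ j = n + 4 := by omega
    · exact h.isRelPrime i j hij hj hji
    · exact h.isRelPrime_add_four (by omega) hij

theorem goodUpTo (N : ℕ) : GoodUpTo u N := by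
  induction N with
  | zero => exact goodUpTo_of_le_four (by omega)
  | succ N ih =>
    rcases lt_or_ge N 4 with hN | hN
    · exact goodUpTo_of_le_four hN
    obtain ⟨n, rfl⟩ := Nat.exists_eq_add_of_le' hN
    exact ih.succ

theorem isSomos4_generic : IsSomos4 genα genβ (generic u) :=
  fun n => (goodUpTo (n + 4)).rel_self

end Somos4

theorem IsSomos4.exists_int_eq {K : Type*} [CommRing K] [IsDomain K] {α : ℤ} {β : ℕ → K}
    (hβ : Function.Periodic β 3) (hβℤ : ∀ n, ∃ b : ℤ, β n = b) {s : ℕ → K}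
    (hs : IsSomos4 (α : K) β s) (hne : ∀ n, s n ≠ 0)
    (hinit : ∀ n < 4, ∃ e : ℤ, IsUnit e ∧ s n = e) (n : ℕ) : ∃ k : ℤ, s n = k := by
  choose b hb using hβℤ
  choose e he hse using hinit
  let u : Fin 4 → ℤˣ := fun i => (he i i.isLt).unit
  let f : Somos4.Coeffs →+* K :=
    (Int.castRingHom K).comp (eval fun i => i.elim α fun j => b j.val)
  have hf : IsSomos4 (α : K) β fun n => f (Somos4.generic u n) := by
    refine Somos4.isSomos4_generic.map f (by simp [f, Somos4.genα]) fun n => ?_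
    simp [f, Somos4.genβ, ← hb, ZMod.val_natCast, hβ.map_mod_nat]
  have : s = fun n => f (Somos4.generic u n) := hs.eq hf hne fun n hn => by
    interval_cases n <;> simp [f, u, Somos4.generic, hse]
  exact ⟨_, congrFun this n⟩

section Boussinesq

variable {K : Type*}

def IsBoussinesq [CommRing K] (A B : K) (p : ℕ → K) : Prop :=
  ∀ n, p (n + 3) * (A * p (n + 1) * p (n + 5) + B * p (n + 2) * p (n + 4))
    + p n * p (n + 4) * p (n + 5) + p (n + 1) * p (n + 2) * p (n + 6) = 0

theorem isBoussinesq_of_eq_div [Field K] {A B : K} {p : ℕ → K}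
    (hden : ∀ n, p (n + 1) * p (n + 2) ≠ 0)
    (hrec : ∀ n, p (n + 6) = -(A * p (n + 1) * p (n + 3) * p (n + 5)
      + B * p (n + 2) * p (n + 3) * p (n + 4) + p n * p (n + 4) * p (n + 5))
        / (p (n + 1) * p (n + 2))) :
    IsBoussinesq A B p := fun n => by
  rw [hrec n, mul_div_cancel₀ _ (hden n)]
  ring

def boussinesqInvariant [Field K] (A : K) (p : ℕ → K) (n : ℕ) : K :=
  (p n * p (n + 4) + A * p (n + 1) * p (n + 3)) / p (n + 2) ^ 2

theorem IsBoussinesq.periodic_invariant [Field K] {A B : K} {p : ℕ → K}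
    (hB : IsBoussinesq A B p) (hne : ∀ n, p (n + 1) ≠ 0) :
    Function.Periodic (boussinesqInvariant A p) 3 := fun n => by
  have h0 := hB n
  have h1 := hB (n + 1)
  have hmul : (p (n + 1) * p (n + 2) * p (n + 3)) *
      ((p (n + 3) * p (n + 7) + A * p (n + 4) * p (n + 6)) * p (n + 2) ^ 2) =
      (p (n + 1) * p (n + 2) * p (n + 3)) *
      ((p n * p (n + 4) + A * p (n + 1) * p (n + 3)) * p (n + 5) ^ 2) := by
    linear_combination (p (n + 1) * p (n + 2) ^ 2 * p (n + 3)) * h1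
      - (p (n + 1) * p (n + 2) * p (n + 3) * p (n + 5)) * h0
  have h2 := hne (n + 1)
  have h5 := hne (n + 4)
  have h := mul_left_cancel₀ (mul_ne_zero (mul_ne_zero (hne n) h2) (hne (n + 2))) hmul
  simp only [boussinesqInvariant]
  field_simp
  linear_combination h

theorem IsBoussinesq.exists_int_invariant [Field K] {A B : ℤ} {p : ℕ → K}
    (hB : IsBoussinesq (A : K) B p) (hne : ∀ n, p (n + 1) ≠ 0)
    (h0 : ∃ k : ℤ, p 0 = k) (h5 : ∃ k : ℤ, p 5 = k)
    (hunit : ∀ n < 4, ∃ e : ℤ, IsUnit e ∧ p (n + 1) = e) (n : ℕ) :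
    ∃ k : ℤ, boussinesqInvariant (A : K) p n = k := by
  obtain ⟨a0, hp0⟩ := h0
  obtain ⟨a5, hp5⟩ := h5
  obtain ⟨a1, u1, hp1⟩ := hunit 0 (by norm_num)
  obtain ⟨a2, u2, hp2⟩ := hunit 1 (by norm_num)
  obtain ⟨a3, u3, hp3⟩ := hunit 2 (by norm_num)
  obtain ⟨a4, u4, hp4⟩ := hunit 3 (by norm_num)
  have sq {e : ℤ} (he : IsUnit e) : (e : K) ^ 2 = 1 := by
    rw [← Int.cast_pow, Int.isUnit_sq he, Int.cast_one]
  set a6 := -(A * a1 * a3 * a5 + B * a2 * a3 * a4 + a0 * a4 * a5) * (a1 * a2)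
  have hp6 : p 6 = a6 := by
    have := hB 0
    simp only [hp0, hp1, hp2, hp3, hp4, hp5, zero_add] at this
    simp only [a6]
    push_cast
    linear_combination (a1 * a2 : K) * this - p 6 * (a2 : K) ^ 2 * sq u1 - p 6 * sq u2
  rw [← (hB.periodic_invariant hne).map_mod_nat]
  obtain h | h | h : n % 3 = 0 ∨ n % 3 = 1 ∨ n % 3 = 2 := by omega
  all_goals simp only [h, boussinesqInvariant, zero_add] at hp1 hp2 hp3 hp4 ⊢
  · exact ⟨a0 * a4 + A * a1 * a3, by simp [hp0, hp1, hp2, hp3, hp4, sq u2]⟩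
  · exact ⟨a1 * a5 + A * a2 * a4, by simp [hp1, hp2, hp3, hp4, hp5, sq u3]⟩
  · exact ⟨a2 * a6 + A * a3 * a5, by simp [hp2, hp3, hp4, hp5, hp6, sq u4]⟩

theorem isSomos4_boussinesqInvariant_shift [Field K] {A : K} {p : ℕ → K}
    (hne : ∀ n, p (n + 1) ≠ 0) :
    IsSomos4 (-A) (fun n => boussinesqInvariant A p (n + 1)) fun n => p (n + 1) := fun n => by
  have := hne (n + 2)
  simp only [Somos4.rhs, boussinesqInvariant]
  field_simp
  ring

end Boussinesq

/-- for integer parameters `A, B, p0, p5` and signs `p1, p2, p3, p4 ∈ {1, -1}`,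
any well-defined rational solution of the trilinear Boussinesq recurrence
`p (n+6) = -(A p(n+1) p(n+3) p(n+5) + B p(n+2) p(n+3) p(n+4) + p n p(n+4) p(n+5))
/ (p(n+1) p(n+2))` with these initial values consists entirely of integers. -/
theorem stmt_3 (A B a0 a1 a2 a3 a4 a5 : ℤ)
    (h1 : a1 = 1 ∨ a1 = -1) (h2 : a2 = 1 ∨ a2 = -1)
    (h3 : a3 = 1 ∨ a3 = -1) (h4 : a4 = 1 ∨ a4 = -1)
    (p : ℕ → ℚ)
    (hp0 : p 0 = (a0 : ℚ)) (hp1 : p 1 = (a1 : ℚ)) (hp2 : p 2 = (a2 : ℚ))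
    (hp3 : p 3 = (a3 : ℚ)) (hp4 : p 4 = (a4 : ℚ)) (hp5 : p 5 = (a5 : ℚ))
    (hden : ∀ n : ℕ, p (n + 1) * p (n + 2) ≠ 0)
    (hrec : ∀ n : ℕ,
      p (n + 6) =
        -((A : ℚ) * p (n + 1) * p (n + 3) * p (n + 5) +
            (B : ℚ) * p (n + 2) * p (n + 3) * p (n + 4) +
            p n * p (n + 4) * p (n + 5)) /
          (p (n + 1) * p (n + 2))) :
    ∀ n : ℕ, ∃ k : ℤ, p n = (k : ℚ) := by
  have hne : ∀ n, p (n + 1) ≠ 0 := fun n => left_ne_zero_of_mul (hden n)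
  have hB : IsBoussinesq (A : ℚ) B p := isBoussinesq_of_eq_div hden hrec
  have hunit : ∀ n < 4, ∃ e : ℤ, IsUnit e ∧ p (n + 1) = e := by
    intro n hn
    interval_cases n
    exacts [⟨a1, Int.isUnit_iff.mpr h1, hp1⟩, ⟨a2, Int.isUnit_iff.mpr h2, hp2⟩,
      ⟨a3, Int.isUnit_iff.mpr h3, hp3⟩, ⟨a4, Int.isUnit_iff.mpr h4, hp4⟩]
  rintro (_ | n)
  · exact ⟨a0, hp0⟩
  · have hper := hB.periodic_invariant hne
    exact IsSomos4.exists_int_eq (α := -A) (fun n => hper (n + 1))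
      (fun n => hB.exists_int_invariant hne ⟨a0, hp0⟩ ⟨a5, hp5⟩ hunit (n + 1))
      (by simpa using isSomos4_boussinesqInvariant_shift hne) hne hunit n
end

section
/- Let F be a field, let A, B, a, b ∈ F, and let (p_n)_{n≥0} be a sequence in F with p_0 = a, p_1 = p_2 = p_3 = p_4 = 1, p_5 = b, with all terms p_n nonzero, satisfying the trilinear Boussinesq recurrence p_{n+3}(A·p_{n+1}·p_{n+5} + B·p_{n+2}·p_{n+4}) + p_n·p_{n+4}·p_{n+5} + p_{n+1}·p_{n+2}·p_{n+6} = 0 for all n ≥ 0. Set Y := a·b·(A² + a·b + B) + (a + b)·(a·b + B)·A + B². Then the sequence satisfies the bilinear Somos-type recurrence p_{n+4}·p_{n−3} = B·p_{n+3}·p_{n−2} + Y·p_{n+1}·p_n for all n ≥ 3. -/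
/-- a nonvanishing solution of the trilinear Boussinesq recurrence with
initial values `a, 1, 1, 1, 1, b` satisfies the bilinear Somos-type recurrence
`p (n+4) p (n-3) = B p (n+3) p (n-2) + Y p (n+1) p n` for all `m ≥ 0` at `n = m + 3`, where
`Y = ab(A² + ab + B) + (a + b)(ab + B)A + B²`.  (Here the recurrence is stated with the
index shifted by 3, i.e. for all `m ≥ 0` at `n = m + 3`.) -/
theorem stmt_4 {F : Type*} [Field F] (A B a b : F) (p : ℕ → F)
    (hp0 : p 0 = a) (hp1 : p 1 = 1) (hp2 : p 2 = 1) (hp3 : p 3 = 1) (hp4 : p 4 = 1)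
    (hp5 : p 5 = b)
    (hne : ∀ n : ℕ, p n ≠ 0)
    (hrec : ∀ n : ℕ,
      p (n + 3) * (A * p (n + 1) * p (n + 5) + B * p (n + 2) * p (n + 4)) +
        p n * p (n + 4) * p (n + 5) + p (n + 1) * p (n + 2) * p (n + 6) = 0) :
    ∀ m : ℕ,
      p (m + 7) * p m =
        B * p (m + 6) * p (m + 1) +
          (a * b * (A ^ 2 + a * b + B) + (a + b) * (a * b + B) * A + B ^ 2) *
            p (m + 4) * p (m + 3) := by
  intro m
  induction m with
  | zero =>
    have h6 := hrec 0
    have h7 := hrec 1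
    norm_num at h6 h7 ⊢
    simp only [hp0, hp1, hp2, hp3, hp4, hp5] at h6 h7 ⊢
    linear_combination a * h7 - (a * A + a * b + B) * h6
  | succ m ih =>
    have key : (p (m + 8) * p (m + 1) - B * p (m + 7) * p (m + 2)) *
        (p (m + 3) * p (m + 4)) =
        (p (m + 7) * p m - B * p (m + 6) * p (m + 1)) * (p (m + 4) * p (m + 5)) := by
      have h1 := hrec m
      have h2 := hrec (m + 2)
      have e1 : m + 2 + 1 = m + 3 := by ring
      have e2 : m + 2 + 2 = m + 4 := by ring
      have e3 : m + 2 + 3 = m + 5 := by ring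
      have e4 : m + 2 + 4 = m + 6 := by ring
      have e5 : m + 2 + 5 = m + 7 := by ring
      have e6 : m + 2 + 6 = m + 8 := by ring
      rw [e1, e2, e3, e4, e5, e6] at h2
      linear_combination p (m + 1) * h2 - p (m + 7) * h1
    set Y := a * b * (A ^ 2 + a * b + B) + (a + b) * (a * b + B) * A + B ^ 2 with hY
    rw [ih] at key
    have hne34 : p (m + 3) * p (m + 4) ≠ 0 := mul_ne_zero (hne _) (hne _)
    have key2 : p (m + 8) * p (m + 1) - B * p (m + 7) * p (m + 2) =
        Y * p (m + 5) * p (m + 4) := by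
      apply mul_right_cancel₀ hne34
      rw [key]; ring
    have goal : p (m + 1 + 7) * p (m + 1) =
        B * p (m + 1 + 6) * p (m + 1 + 1) + Y * p (m + 1 + 4) * p (m + 1 + 3) := by
      have e7 : m + 1 + 7 = m + 8 := by ring
      have e8 : m + 1 + 6 = m + 7 := by ring
      have e9 : m + 1 + 1 = m + 2 := by ring
      have e10 : m + 1 + 4 = m + 5 := by ring
      have e11 : m + 1 + 3 = m + 4 := by ring
      rw [e7, e8, e9, e10, e11]
      linear_combination key2
    exact goal
end

section
/- Let F be a field, let p, q, r ∈ F, let σ : ℤ² → F, and define τ : ℤ³ → F by τ(k, l, m) := σ(m − k, l − k). Then τ satisfies the bilinear lattice AKP equation at every point of ℤ³ if and only if σ satisfies, at every (n, m) ∈ ℤ², the nine-point equation (r − p)·σ(n, m+1)·σ(n, m−1) + (p − q)·σ(n+1, m)·σ(n−1, m) + (q − r)·σ(n+1, m+1)·σ(n−1, m−1) = 0. -/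
/-- `τ (k, l, m) := σ (m - k, l - k)` satisfies the bilinear lattice AKP
(Hirota–Miwa) equation with parameters `p, q, r` at every point of `ℤ³` if and only if
`σ` satisfies the nine-point equation
`(r - p) σ(n, m+1) σ(n, m-1) + (p - q) σ(n+1, m) σ(n-1, m)
+ (q - r) σ(n+1, m+1) σ(n-1, m-1) = 0` at every point of `ℤ²`. -/
theorem stmt_7 {F : Type*} [Field F] (p q r : F) (σ : ℤ → ℤ → F)
    (τ : ℤ → ℤ → ℤ → F) (hτ : ∀ k l m : ℤ, τ k l m = σ (m - k) (l - k)) :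
    (∀ k l m : ℤ,
        (p - q) * τ (k + 1) (l + 1) m * τ k l (m + 1) +
          (q - r) * τ k (l + 1) (m + 1) * τ (k + 1) l m +
          (r - p) * τ (k + 1) l (m + 1) * τ k (l + 1) m = 0) ↔
    (∀ n m : ℤ,
        (r - p) * σ n (m + 1) * σ n (m - 1) +
          (p - q) * σ (n + 1) m * σ (n - 1) m +
          (q - r) * σ (n + 1) (m + 1) * σ (n - 1) (m - 1) = 0) := by
  simp only [hτ]
  constructor
  · intro h n m
    have h0 := h 0 m n
    have e1 : n - (0 + 1) = n - 1 := by ring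
    have e2 : m + 1 - (0 + 1) = m := by ring
    have e3 : n + 1 - (0:ℤ) = n + 1 := by ring
    have e4 : m - (0:ℤ) = m := by ring
    have e5 : m + 1 - (0:ℤ) = m + 1 := by ring
    have e6 : m - (0 + 1) = m - 1 := by ring
    have e7 : n + 1 - (0 + 1) = n := by ring
    have e8 : n - (0:ℤ) = n := by ring
    rw [e1, e2, e3, e4, e5, e6, e7, e8] at h0
    linear_combination h0
  · intro h k l m
    have h0 := h (m - k) (l - k)
    have e1 : m - (k + 1) = m - k - 1 := by ring
    have e2 : l + 1 - (k + 1) = l - k := by ring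
    have e3 : m + 1 - k = m - k + 1 := by ring
    have e4 : l + 1 - k = l - k + 1 := by ring
    have e5 : m + 1 - (k + 1) = m - k := by ring
    have e6 : l - (k + 1) = l - k - 1 := by ring
    rw [e1, e2, e3, e4, e5, e6]
    linear_combination h0
end

section
/- Let F be a field, let p, q ∈ F, let σ : ℤ² → F, and define τ : ℤ³ → F by τ(n, m, h) := σ(n − h, m). Then τ satisfies the bilinear lattice AKP equation with parameter triple (p, q, −p) at every point of ℤ³ if and only if σ satisfies, at every (n, m) ∈ ℤ², the bilinear lattice KdV equation (p − q)·σ(n+1, m+1)·σ(n−1, m) + (q + p)·σ(n−1, m+1)·σ(n+1, m) = 2p·σ(n, m)·σ(n, m+1). -/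
/-- `τ (n, m, h) := σ (n - h, m)` satisfies the bilinear lattice AKP
(Hirota–Miwa) equation with parameter triple `(p, q, -p)` at every point of `ℤ³` if and
only if `σ` satisfies the bilinear lattice KdV equation
`(p - q) σ(n+1, m+1) σ(n-1, m) + (q + p) σ(n-1, m+1) σ(n+1, m) = 2p σ(n, m) σ(n, m+1)`
at every point of `ℤ²`. -/
theorem stmt_8 {F : Type*} [Field F] (p q : F) (σ : ℤ → ℤ → F)
    (τ : ℤ → ℤ → ℤ → F) (hτ : ∀ n m h : ℤ, τ n m h = σ (n - h) m) :
    (∀ n m h : ℤ,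
        (p - q) * τ (n + 1) (m + 1) h * τ n m (h + 1) +
          (q - (-p)) * τ n (m + 1) (h + 1) * τ (n + 1) m h +
          ((-p) - p) * τ (n + 1) m (h + 1) * τ n (m + 1) h = 0) ↔
    (∀ n m : ℤ,
        (p - q) * σ (n + 1) (m + 1) * σ (n - 1) m +
          (q + p) * σ (n - 1) (m + 1) * σ (n + 1) m = 2 * p * σ n m * σ n (m + 1)) := by
  constructor
  · intro H n m
    have h0 := H n m 0
    simp only [hτ] at h0
    norm_num at h0
    linear_combination h0
  · intro H n m h
    have h0 := H (n - h) m
    simp only [hτ]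
    have e1 : n + 1 - h = n - h + 1 := by ring
    have e2 : n - (h + 1) = n - h - 1 := by ring
    have e3 : n + 1 - (h + 1) = n - h := by ring
    rw [e1, e2, e3]
    linear_combination h0
end

section
/- Let F be a field and σ : ℤ² → F a function satisfying the HADT equation at every point (l, k) ∈ ℤ²: σ(l+1, k−2)·σ(l−1, k+1)·(σ(l, k−1)·σ(l, k+2) − σ(l, k)·σ(l, k+1)) = σ(l, k−1)·σ(l−1, k+2)·(σ(l−1, k+1)·σ(l+2, k−2) − σ(l, k)·σ(l+1, k−1)) + σ(l, k+1)·σ(l+1, k−1)·(σ(l−1, k+2)·σ(l, k−2) − σ(l−2, k+2)·σ(l+1, k−2)). Define τ : ℤ² → F by τ(l, k) := σ(l, −l − k). Then τ satisfies, at every point (l, k) ∈ ℤ², the quadrilinear dual Boussinesq equation with x = y = 1, z = −1: [τ(l, k+1)·τ(l−1, k)·τ(l−1, k−1)·τ(l+2, k) − τ(l, k−1)·τ(l+1, k)·τ(l+1, k+1)·τ(l−2, k)] + [τ(l, k−1)·τ(l+1, k)·τ(l−1, k−1)·τ(l, k+2) − τ(l+1, k+1)·τ(l, k+1)·τ(l−1,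 k)·τ(l, k−2)] − [τ(l, k)·τ(l+1, k)·τ(l, k+1)·τ(l−1, k−1) − τ(l, k)·τ(l, k−1)·τ(l+1, k+1)·τ(l−1, k)] = 0. -/
/-- if `σ` satisfies the HADT equation at every point of `ℤ²`, then
`τ (l, k) := σ (l, -l - k)` satisfies the quadrilinear dual Boussinesq equation with
parameters `x = y = 1`, `z = -1` at every point of `ℤ²`. -/
theorem stmt_9 {F : Type*} [Field F] (σ : ℤ → ℤ → F)
    (hHADT : ∀ l k : ℤ,
      σ (l + 1) (k - 2) * σ (l - 1) (k + 1) *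
          (σ l (k - 1) * σ l (k + 2) - σ l k * σ l (k + 1)) =
        σ l (k - 1) * σ (l - 1) (k + 2) *
            (σ (l - 1) (k + 1) * σ (l + 2) (k - 2) - σ l k * σ (l + 1) (k - 1)) +
          σ l (k + 1) * σ (l + 1) (k - 1) *
            (σ (l - 1) (k + 2) * σ l (k - 2) - σ (l - 2) (k + 2) * σ (l + 1) (k - 2)))
    (τ : ℤ → ℤ → F) (hτ : ∀ l k : ℤ, τ l k = σ l (-l - k)) :
    ∀ l k : ℤ,
      (τ l (k + 1) * τ (l - 1) k * τ (l - 1) (k - 1) * τ (l + 2) k -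
          τ l (k - 1) * τ (l + 1) k * τ (l + 1) (k + 1) * τ (l - 2) k) +
        (τ l (k - 1) * τ (l + 1) k * τ (l - 1) (k - 1) * τ l (k + 2) -
          τ (l + 1) (k + 1) * τ l (k + 1) * τ (l - 1) k * τ l (k - 2)) -
        (τ l k * τ (l + 1) k * τ l (k + 1) * τ (l - 1) (k - 1) -
          τ l k * τ l (k - 1) * τ (l + 1) (k + 1) * τ (l - 1) k) = 0 := by
  intro l k
  have h := hHADT l (-l - k)
  simp only [hτ]
  ring_nf at h ⊢
  linear_combination -h
end

section
/- Let F be a field, let A, B, C, D ∈ F, and let u : ℤ² → F be nowhere vanishing and satisfy the trilinear Boussinesq lattice equation at every point (n, m): A·u(n, m+1)·u(n, m)·u(n, m−1) + B·u(n+1, m)·u(n, m)·u(n−1, m) + C·u(n+1, m+1)·u(n, m)·u(n−1, m−1) + D·(u(n+1, m)·u(n, m−1)·u(n−1, m+1) + u(n, m+1)·u(n−1, m)·u(n+1, m−1)) = 0. For j ∈ {1, 2, 3} define the scalar densities 𝒫_j := A·P_{1j} + B·P_{2j} + C·P_{3j} + D·P_{4j} and 𝒬_j := A·Q_{1j} +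 B·Q_{2j} + C·Q_{3j} + D·Q_{4j}, with P and Q as in the context. Then for each j ∈ {1, 2, 3} the conservation law 𝒫_j(n+1, m) − 𝒫_j(n, m) + 𝒬_j(n, m+1) − 𝒬_j(n, m) = 0 holds for all (n, m) ∈ ℤ². -/
/-- The 4×3 matrix of densities `P` of the matrix conservation law, evaluated at base
point `(n, m)`; `u (n+i) (m+j)` plays the role of the shifted τ-function. -/
noncomputable def consP {F : Type*} [Field F] (u : ℤ → ℤ → F) (n m : ℤ) :
    Fin 4 → Fin 3 → F :=
  let v : ℤ → ℤ → F := fun a b => u (n + a) (m + b)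
  ![![v (-1) 1 * v 1 0 / (v 0 0 * v 0 1) + v (-2) 1 * v 0 0 / (v (-1) 0 * v (-1) 1), 0, 0],
    ![v 1 0 * v (-2) 0 / (v 0 1 * v (-1) (-1)),
      v 0 0 * v (-1) 2 / (v 0 1 * v (-1) 1),
      v (-1) 0 * v 0 0 / (v 0 1 * v (-1) (-1))],
    ![v (-2) (-1) * v 1 0 / (v (-1) (-1) * v 0 0),
      -(v (-1) (-1) * v 0 2 / (v 0 1 * v (-1) 0)),
      -(v (-1) (-1) * v 0 0 / (v 0 (-1) * v (-1) 0))],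
    ![v 1 0 * v (-2) 1 / (v (-1) 0 * v 0 1) +
        v 0 (-1) * v (-2) 0 * v 1 0 * v (-1) 1 / (v 0 1 * v 0 0 * v (-1) (-1) * v (-1) 0),
      v 0 (-1) * v (-1) 2 / (v 0 1 * v (-1) 0),
      v 0 (-1) * v (-1) 1 / (v 0 1 * v (-1) (-1))]]

/-- The 4×3 matrix of fluxes `Q` of the matrix conservation law, evaluated at base
point `(n, m)`. -/
noncomputable def consQ {F : Type*} [Field F] (u : ℤ → ℤ → F) (n m : ℤ) :
    Fin 4 → Fin 3 → F :=
  let v : ℤ → ℤ → F := fun a b => u (n + a) (m + b)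
  ![![v (-2) 0 * v 0 (-1) / (v (-1) (-1) * v (-1) 0),
      v 0 1 * v 0 (-2) / (v 1 0 * v (-1) (-1)),
      v 0 0 * v 0 (-1) / (v 1 0 * v (-1) (-1))],
    ![0,
      v 0 (-1) * v (-1) 1 / (v 0 0 * v (-1) 0) + v (-1) 0 * v 0 (-2) / (v 0 (-1) * v (-1) (-1)),
      0],
    ![-(v (-2) (-1) * v 1 0 / (v (-1) (-1) * v 0 0)),
      v 1 1 * v 0 (-2) / (v 0 (-1) * v 1 0),
      -(v 0 (-1) * v 1 0 / (v 1 (-1) * v 0 0))],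
    ![v (-2) 0 * v 1 (-1) / (v 0 0 * v (-1) (-1)),
      v 0 (-2) * v (-1) 1 / (v 0 0 * v (-1) (-1)) +
        v 0 1 * v 0 (-2) * v (-1) 0 * v 1 (-1) / (v 0 0 * v 0 (-1) * v 1 0 * v (-1) (-1)),
      v (-1) 0 * v 1 (-1) / (v 1 0 * v (-1) (-1))]]

/-- The row vector `V` whose pairing with `(A, B, C, D)` gives the trilinear Boussinesq
equation, evaluated at base point `(n, m)`. -/
noncomputable def consV {F : Type*} [Field F] (u : ℤ → ℤ → F) (n m : ℤ) : Fin 4 → F :=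
  let v : ℤ → ℤ → F := fun a b => u (n + a) (m + b)
  ![v 0 1 * v 0 0 * v 0 (-1),
    v 1 0 * v 0 0 * v (-1) 0,
    v 1 1 * v 0 0 * v (-1) (-1),
    v 1 0 * v 0 (-1) * v (-1) 1 + v 0 1 * v (-1) 0 * v 1 (-1)]

/-- The row vector `U = (X₂, X₃, X₄)` of characteristics, evaluated at base point
`(n, m)`. -/
noncomputable def consU {F : Type*} [Field F] (u : ℤ → ℤ → F) (n m : ℤ) : Fin 3 → F :=
  let v : ℤ → ℤ → F := fun a b => u (n + a) (m + b)
  ![v 0 2 / (v 0 1 * v 0 0 * v (-1) 0 * v 1 1) -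
      v 0 (-2) / (v 0 0 * v 0 (-1) * v 1 0 * v (-1) (-1)),
    v 2 0 / (v 0 0 * v 0 (-1) * v 1 0 * v 1 1) -
      v (-2) 0 / (v 0 1 * v 0 0 * v (-1) (-1) * v (-1) 0),
    1 / (v 0 (-1) * v (-1) 0 * v 1 1) - 1 / (v 0 1 * v 1 0 * v (-1) (-1))]


set_option maxHeartbeats 2000000 in
/-- if the nowhere-vanishing `u : ℤ² → F` satisfies the trilinear
Boussinesq lattice equation with coefficients `A, B, C, D` at every point, then each of
the three scalar densities `𝒫_j = A P₁ⱼ + B P₂ⱼ + C P₃ⱼ + D P₄ⱼ` with fluxes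
`𝒬_j = A Q₁ⱼ + B Q₂ⱼ + C Q₃ⱼ + D Q₄ⱼ` gives a conservation law. -/
theorem stmt_11 {F : Type*} [Field F] (A B C D : F) (u : ℤ → ℤ → F)
    (hu : ∀ n m : ℤ, u n m ≠ 0)
    (heq : ∀ n m : ℤ,
      A * u n (m + 1) * u n m * u n (m - 1) +
        B * u (n + 1) m * u n m * u (n - 1) m +
        C * u (n + 1) (m + 1) * u n m * u (n - 1) (m - 1) +
        D * (u (n + 1) m * u n (m - 1) * u (n - 1) (m + 1) +
              u n (m + 1) * u (n - 1) m * u (n + 1) (m - 1)) = 0) :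
    ∀ (j : Fin 3) (n m : ℤ),
      (A * consP u (n + 1) m 0 j + B * consP u (n + 1) m 1 j + C * consP u (n + 1) m 2 j +
          D * consP u (n + 1) m 3 j) -
        (A * consP u n m 0 j + B * consP u n m 1 j + C * consP u n m 2 j +
          D * consP u n m 3 j) +
        (A * consQ u n (m + 1) 0 j + B * consQ u n (m + 1) 1 j + C * consQ u n (m + 1) 2 j +
          D * consQ u n (m + 1) 3 j) -
        (A * consQ u n m 0 j + B * consQ u n m 1 j + C * consQ u n m 2 j +
          D * consQ u n m 3 j) = 0 := by
  intro j n m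
  have E0 := heq n m
  have en2 : n + -2 = n - 2 := by ring
  have en1 : n + -1 = n - 1 := by ring
  have en0 : n + 0 = n := by ring
  have ep2 : n + 1 + -2 = n - 1 := by ring
  have ep1 : n + 1 + -1 = n := by ring
  have ep0 : n + 1 + 0 = n + 1 := by ring
  have epp : n + 1 + 1 = n + 2 := by ring
  have fm2 : m + -2 = m - 2 := by ring
  have fm1 : m + -1 = m - 1 := by ring
  have fm0 : m + 0 = m := by ring
  have fp2 : m + 1 + -2 = m - 1 := by ring
  have fp1 : m + 1 + -1 = m := by ring
  have fp0 : m + 1 + 0 = m + 1 := by ring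
  have fpp : m + 1 + 1 = m + 2 := by ring
  have hw_m1_m1 : u (n - 1) (m - 1) * (u (n - 1) (m - 1))⁻¹ = 1 := mul_inv_cancel₀ (hu _ _)
  have hw_m1_0 : u (n - 1) m * (u (n - 1) m)⁻¹ = 1 := mul_inv_cancel₀ (hu _ _)
  have hw_0_m1 : u n (m - 1) * (u n (m - 1))⁻¹ = 1 := mul_inv_cancel₀ (hu _ _)
  have hw_0_0 : u n m * (u n m)⁻¹ = 1 := mul_inv_cancel₀ (hu _ _)
  have hw_0_1 : u n (m + 1) * (u n (m + 1))⁻¹ = 1 := mul_inv_cancel₀ (hu _ _)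
  have hw_1_0 : u (n + 1) m * (u (n + 1) m)⁻¹ = 1 := mul_inv_cancel₀ (hu _ _)
  have hw_1_1 : u (n + 1) (m + 1) * (u (n + 1) (m + 1))⁻¹ = 1 := mul_inv_cancel₀ (hu _ _)
  fin_cases j <;>
    simp only [consP, consQ, Fin.isValue, Fin.zero_eta, Fin.mk_one, Fin.reduceFinMk,
      Matrix.cons_val', Matrix.cons_val_zero, Matrix.cons_val_one, Matrix.head_cons,
      Matrix.empty_val', Matrix.cons_val_fin_one, Matrix.head_fin_const,
      Matrix.cons_val_two, Matrix.tail_cons, Matrix.cons_val_three,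
      en2, en1, en0, ep2, ep1, ep0, epp, fm2, fm1, fm0, fp2, fp1, fp0, fpp,
      div_eq_mul_inv, mul_inv, one_div]
  · linear_combination
        ((-1) * (u (n - 2) m) * (u (n - 1) (m - 1))⁻¹ * (u (n - 1) m)⁻¹ * (u n m)⁻¹ * (u n (m + 1))⁻¹ + (u (n + 2) m) * (u n (m - 1))⁻¹ * (u n m)⁻¹ * (u (n + 1) m)⁻¹ * (u (n + 1) (m + 1))⁻¹) * E0 +
        (C * (u (n - 2) m) * (u n m) * (u (n + 1) (m + 1)) * (u (n - 1) m)⁻¹ * (u n m)⁻¹ * (u n (m + 1))⁻¹) * hw_m1_m1 +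
        (B * (u (n - 2) m) * (u n m) * (u (n + 1) m) * (u (n - 1) (m - 1))⁻¹ * (u n m)⁻¹ * (u n (m + 1))⁻¹ + D * (u (n - 2) m) * (u n (m + 1)) * (u (n + 1) (m - 1)) * (u (n - 1) (m - 1))⁻¹ * (u n m)⁻¹ * (u n (m + 1))⁻¹) * hw_m1_0 +
        ((-1) * A * (u n m) * (u n (m + 1)) * (u (n + 2) m) * (u n m)⁻¹ * (u (n + 1) m)⁻¹ * (u (n + 1) (m + 1))⁻¹ + (-1) * D * (u (n - 1) (m + 1)) * (u (n + 1) m) * (u (n + 2) m) * (u n m)⁻¹ * (u (n + 1) m)⁻¹ * (u (n + 1) (m + 1))⁻¹) * hw_0_m1 +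
        (A * (u (n - 2) m) * (u n (m - 1)) * (u n (m + 1)) * (u (n - 1) (m - 1))⁻¹ * (u (n - 1) m)⁻¹ * (u n (m + 1))⁻¹ + (-1) * A * (u n (m + 1)) * (u (n + 2) m) * (u (n + 1) m)⁻¹ * (u (n + 1) (m + 1))⁻¹ + B * (u (n - 2) m) * (u (n + 1) m) * (u (n - 1) (m - 1))⁻¹ * (u n (m + 1))⁻¹ + (-1) * B * (u (n - 1) m) * (u (n + 1) m) * (u (n + 2) m) * (u n (m - 1))⁻¹ * (u (n + 1) m)⁻¹ * (u (n + 1) (m + 1))⁻¹ + C * (u (n - 2) m) * (u (n + 1) (m + 1)) * (u (n - 1) m)⁻¹ * (u n (m + 1))⁻¹ + (-1) * C * (u (n - 1) (m - 1)) * (u (n + 1) (m + 1)) * (u (n + 2) m) * (u n (m - 1))⁻¹ * (u (n + 1) m)⁻¹ * (u (n + 1) (m + 1))⁻¹) * hw_0_0 +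
        (A * (u (n - 2) m) * (u n (m - 1)) * (u (n - 1) (m - 1))⁻¹ * (u (n - 1) m)⁻¹ + D * (u (n - 2) m) * (u (n + 1) (m - 1)) * (u (n - 1) (m - 1))⁻¹ * (u n m)⁻¹) * hw_0_1 +
        ((-1) * B * (u (n - 1) m) * (u (n + 2) m) * (u n (m - 1))⁻¹ * (u (n + 1) (m + 1))⁻¹ + (-1) * D * (u (n - 1) (m + 1)) * (u (n + 2) m) * (u n m)⁻¹ * (u (n + 1) (m + 1))⁻¹) * hw_1_0 +
        ((-1) * C * (u (n - 1) (m - 1)) * (u (n + 2) m) * (u n (m - 1))⁻¹ * (u (n + 1) m)⁻¹) * hw_1_1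
  · linear_combination
        ((-1) * (u n (m - 2)) * (u (n - 1) (m - 1))⁻¹ * (u n (m - 1))⁻¹ * (u n m)⁻¹ * (u (n + 1) m)⁻¹ + (u n (m + 2)) * (u (n - 1) m)⁻¹ * (u n m)⁻¹ * (u n (m + 1))⁻¹ * (u (n + 1) (m + 1))⁻¹) * E0 +
        (C * (u n (m - 2)) * (u n m) * (u (n + 1) (m + 1)) * (u n (m - 1))⁻¹ * (u n m)⁻¹ * (u (n + 1) m)⁻¹) * hw_m1_m1 +
        ((-1) * B * (u n m) * (u n (m + 2)) * (u (n + 1) m) * (u n m)⁻¹ * (u n (m + 1))⁻¹ * (u (n + 1) (m + 1))⁻¹ + (-1) * D * (u n (m + 1)) * (u n (m + 2)) * (u (n + 1) (m - 1)) * (u n m)⁻¹ * (u n (m + 1))⁻¹ * (u (n + 1) (m + 1))⁻¹) * hw_m1_0 +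
        (A * (u n (m - 2)) * (u n m) * (u n (m + 1)) * (u (n - 1) (m - 1))⁻¹ * (u n m)⁻¹ * (u (n + 1) m)⁻¹ + D * (u (n - 1) (m + 1)) * (u n (m - 2)) * (u (n + 1) m) * (u (n - 1) (m - 1))⁻¹ * (u n m)⁻¹ * (u (n + 1) m)⁻¹) * hw_0_m1 +
        (A * (u n (m - 2)) * (u n (m + 1)) * (u (n - 1) (m - 1))⁻¹ * (u (n + 1) m)⁻¹ + (-1) * A * (u n (m - 1)) * (u n (m + 1)) * (u n (m + 2)) * (u (n - 1) m)⁻¹ * (u n (m + 1))⁻¹ * (u (n + 1) (m + 1))⁻¹ + B * (u (n - 1) m) * (u n (m - 2)) * (u (n + 1) m) * (u (n - 1) (m - 1))⁻¹ * (u n (m - 1))⁻¹ * (u (n + 1) m)⁻¹ + (-1) * B * (u n (m + 2)) * (u (n + 1) m) * (u n (m + 1))⁻¹ * (u (n + 1) (m + 1))⁻¹ + (-1) * C * (u (n - 1) (m - 1)) * (u n (m + 2)) * (u (n + 1) (m + 1)) * (u (n - 1) m)⁻¹ * (u n (m + 1))⁻¹ * (u (n + 1) (m + 1))⁻¹ +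 C * (u n (m - 2)) * (u (n + 1) (m + 1)) * (u n (m - 1))⁻¹ * (u (n + 1) m)⁻¹) * hw_0_0 +
        ((-1) * A * (u n (m - 1)) * (u n (m + 2)) * (u (n - 1) m)⁻¹ * (u (n + 1) (m + 1))⁻¹ + (-1) * D * (u n (m + 2)) * (u (n + 1) (m - 1)) * (u n m)⁻¹ * (u (n + 1) (m + 1))⁻¹) * hw_0_1 +
        (B * (u (n - 1) m) * (u n (m - 2)) * (u (n - 1) (m - 1))⁻¹ * (u n (m - 1))⁻¹ + D * (u (n - 1) (m + 1)) * (u n (m - 2)) * (u (n - 1) (m - 1))⁻¹ * (u n m)⁻¹) * hw_1_0 +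
        ((-1) * C * (u (n - 1) (m - 1)) * (u n (m + 2)) * (u (n - 1) m)⁻¹ * (u n (m + 1))⁻¹) * hw_1_1
  · linear_combination
        ((-1) * (u (n - 1) (m - 1))⁻¹ * (u n (m + 1))⁻¹ * (u (n + 1) m)⁻¹ + (u (n - 1) m)⁻¹ * (u n (m - 1))⁻¹ * (u (n + 1) (m + 1))⁻¹) * E0 +
        (C * (u n m) * (u (n + 1) (m + 1)) * (u n (m + 1))⁻¹ * (u (n + 1) m)⁻¹) * hw_m1_m1 +
        ((-1) * B * (u n m) * (u (n + 1) m) * (u n (m - 1))⁻¹ * (u (n + 1) (m + 1))⁻¹ + (-1) * D * (u n (m + 1)) * (u (n + 1) (m - 1)) * (u n (m - 1))⁻¹ * (u (n + 1) (m + 1))⁻¹) * hw_m1_0 +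
        ((-1) * A * (u n m) * (u n (m + 1)) * (u (n - 1) m)⁻¹ * (u (n + 1) (m + 1))⁻¹ + (-1) * D * (u (n - 1) (m + 1)) * (u (n + 1) m) * (u (n - 1) m)⁻¹ * (u (n + 1) (m + 1))⁻¹) * hw_0_m1 +
        (A * (u n (m - 1)) * (u n m) * (u (n - 1) (m - 1))⁻¹ * (u (n + 1) m)⁻¹ + D * (u (n - 1) m) * (u (n + 1) (m - 1)) * (u (n - 1) (m - 1))⁻¹ * (u (n + 1) m)⁻¹) * hw_0_1 +
        (B * (u (n - 1) m) * (u n m) * (u (n - 1) (m - 1))⁻¹ * (u n (m + 1))⁻¹ + D * (u (n - 1) (m + 1)) * (u n (m - 1)) * (u (n - 1) (m - 1))⁻¹ * (u n (m + 1))⁻¹) * hw_1_0 +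
        ((-1) * C * (u (n - 1) (m - 1)) * (u n m) * (u (n - 1) m)⁻¹ * (u n (m - 1))⁻¹) * hw_1_1
end

section
/- Let F be a field, let A, B ∈ F, and let (x_n)_{n≥0} be a sequence of nonzero elements of F satisfying the trilinear Boussinesq recurrence x_{n+3}(A·x_{n+1}·x_{n+5} + B·x_{n+2}·x_{n+4}) + x_n·x_{n+4}·x_{n+5} + x_{n+1}·x_{n+2}·x_{n+6} = 0 for all n ≥ 0. Define I_n := (A² + B)·x_n·x_{n+5}/(x_{n+2}·x_{n+3}) + A·B·(x_n·x_{n+4}/(x_{n+1}·x_{n+3}) + x_{n+1}·x_{n+5}/(x_{n+2}·x_{n+4})) + A·(x_n·x_{n+5}/(x_{n+2}·x_{n+3}))·(x_n·x_{n+4}/(x_{n+1}·x_{n+3}) + x_{n+1}·x_{n+5}/(x_{n+2}·x_{n+4})) + (x_n·x_{n+5}/(x_{n+2}·x_{n+3}))². Then I_{n+1} = I_n for all n ≥ 0, i.e. I is an integral (invariant) of the six-dimensional map defined by the recurrence. -/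
/-- The first integral (from the second conservation law) of the six-dimensional
trilinear Boussinesq map, as a function of six consecutive terms. -/
noncomputable def triBSQIntI {F : Type*} [Field F] (A B : F) (x : ℕ → F) (n : ℕ) : F :=
  (A ^ 2 + B) * x n * x (n + 5) / (x (n + 2) * x (n + 3)) +
    A * B * (x n * x (n + 4) / (x (n + 1) * x (n + 3)) +
      x (n + 1) * x (n + 5) / (x (n + 2) * x (n + 4))) +
    A * (x n * x (n + 5) / (x (n + 2) * x (n + 3))) *
      (x n * x (n + 4) / (x (n + 1) * x (n + 3)) +
        x (n + 1) * x (n + 5) / (x (n + 2) * x (n + 4))) +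
    (x n * x (n + 5) / (x (n + 2) * x (n + 3))) ^ 2

/-!
In the variables `u n = x n * x (n + 4) / (x (n + 1) * x (n + 3))` the trilinear recurrence,
divided by `x (n + 2) * x (n + 3) * x (n + 4)`, becomes the second-order recurrence
`u n * u (n + 1) + u (n + 1) * u (n + 2) + A * u (n + 1) + B = 0`, and
`I n + A² B = (u n * u (n + 1) + B) * (u n + A) * (u (n + 1) + A)`.
By the recurrence, `u n * u (n + 1) + B = -u (n + 1) * (u (n + 2) + A)`, so
`I n + A² B = -u (n + 1) * (u n + A) * (u (n + 1) + A) * (u (n + 2) + A)`,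
which is symmetric in `u n` and `u (n + 2)`; the same expression is obtained for `I (n + 1)`.
-/

def triBSQQuartic {R : Type*} [CommRing R] (A B a b : R) : R :=
  (a * b + B) * ((a + A) * (b + A))

theorem triBSQQuartic_eq_of_recurrence {R : Type*} [CommRing R] {A B a b c : R}
    (h : a * b + b * c + A * b + B = 0) :
    triBSQQuartic A B b c = triBSQQuartic A B a b := by
  unfold triBSQQuartic
  linear_combination (b + A) * (c - a) * h

section Ratio

variable {F : Type*} [Field F] (x : ℕ → F)

noncomputable def triBSQRatio (n : ℕ) : F :=
  x n * x (n + 4) / (x (n + 1) * x (n + 3))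

theorem triBSQIntI_eq_triBSQQuartic (A B : F) {n : ℕ} (h₁ : x (n + 1) ≠ 0)
    (h₄ : x (n + 4) ≠ 0) :
    triBSQIntI A B x n =
      triBSQQuartic A B (triBSQRatio x n) (triBSQRatio x (n + 1)) - A ^ 2 * B := by
  unfold triBSQIntI triBSQQuartic triBSQRatio
  field_simp
  ring

theorem triBSQRatio_recurrence (A B : F) (hne : ∀ n, x n ≠ 0) {n : ℕ}
    (hrec : x (n + 3) * (A * x (n + 1) * x (n + 5) + B * x (n + 2) * x (n + 4)) +
        x n * x (n + 4) * x (n + 5) + x (n + 1) * x (n + 2) * x (n + 6) = 0) :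
    triBSQRatio x n * triBSQRatio x (n + 1) + triBSQRatio x (n + 1) * triBSQRatio x (n + 2) +
      A * triBSQRatio x (n + 1) + B = 0 := by
  unfold triBSQRatio
  field_simp [hne]
  linear_combination hrec

end Ratio

/-- for any nonvanishing solution of the trilinear Boussinesq recurrence
`x (n+3) (A x (n+1) x (n+5) + B x (n+2) x (n+4)) + x n x (n+4) x (n+5)
+ x (n+1) x (n+2) x (n+6) = 0`, the quantity `I_n` is an invariant. -/
theorem stmt_15 {F : Type*} [Field F] (A B : F) (x : ℕ → F)
    (hne : ∀ n : ℕ, x n ≠ 0)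
    (hrec : ∀ n : ℕ,
      x (n + 3) * (A * x (n + 1) * x (n + 5) + B * x (n + 2) * x (n + 4)) +
        x n * x (n + 4) * x (n + 5) + x (n + 1) * x (n + 2) * x (n + 6) = 0) :
    ∀ n : ℕ, triBSQIntI A B x (n + 1) = triBSQIntI A B x n := by
  intro n
  rw [triBSQIntI_eq_triBSQQuartic x A B (hne _) (hne _),
    triBSQIntI_eq_triBSQQuartic x A B (hne _) (hne _),
    triBSQQuartic_eq_of_recurrence (triBSQRatio_recurrence x A B hne (hrec n))]
end

section
/- Let F be a field, let A, B ∈ F, and let (x_n)_{n≥0} be a sequence of nonzero elements of F satisfying the trilinear Boussinesq recurrence x_{n+3}(A·x_{n+1}·x_{n+5} + B·x_{n+2}·x_{n+4}) + x_n·x_{n+4}·x_{n+5} + x_{n+1}·x_{n+2}·x_{n+6} = 0 for all n ≥ 0. Define J_n := (B·x_{n+2}·x_{n+3} + x_n·x_{n+5})/(x_{n+1}·x_{n+4}) − (A·x_{n+1}·x_{n+3} + x_n·x_{n+4})/x_{n+2}² − (A·x_{n+2}·x_{n+4} + x_{n+1}·x_{n+5})/x_{n+3}². Then J_{n+1} =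 J_n for all n ≥ 0, i.e. J is an integral (invariant) of the six-dimensional map defined by the recurrence. -/
/-- The second integral (from the third conservation law) of the six-dimensional
trilinear Boussinesq map, as a function of six consecutive terms. -/
noncomputable def triBSQIntJ {F : Type*} [Field F] (A B : F) (x : ℕ → F) (n : ℕ) : F :=
  (B * x (n + 2) * x (n + 3) + x n * x (n + 5)) / (x (n + 1) * x (n + 4)) -
    (A * x (n + 1) * x (n + 3) + x n * x (n + 4)) / (x (n + 2)) ^ 2 -
    (A * x (n + 2) * x (n + 4) + x (n + 1) * x (n + 5)) / (x (n + 3)) ^ 2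

/-- for any nonvanishing solution of the trilinear Boussinesq recurrence
`x (n+3) (A x (n+1) x (n+5) + B x (n+2) x (n+4)) + x n x (n+4) x (n+5)
+ x (n+1) x (n+2) x (n+6) = 0`, the quantity `J_n` is an invariant. -/
theorem stmt_16 {F : Type*} [Field F] (A B : F) (x : ℕ → F)
    (hne : ∀ n : ℕ, x n ≠ 0)
    (hrec : ∀ n : ℕ,
      x (n + 3) * (A * x (n + 1) * x (n + 5) + B * x (n + 2) * x (n + 4)) +
        x n * x (n + 4) * x (n + 5) + x (n + 1) * x (n + 2) * x (n + 6) = 0) :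
    ∀ n : ℕ, triBSQIntJ A B x (n + 1) = triBSQIntJ A B x n := by
  intro n
  set x0 := x n
  set x1 := x (n + 1)
  set x2 := x (n + 2)
  set x3 := x (n + 3)
  set x4 := x (n + 4)
  set x5 := x (n + 5)
  set x6 := x (n + 6)
  have h1 : x1 ≠ 0 := hne (n + 1)
  have h2 : x2 ≠ 0 := hne (n + 2)
  have h3 : x3 ≠ 0 := hne (n + 3)
  have h4 : x4 ≠ 0 := hne (n + 4)
  have h5 : x5 ≠ 0 := hne (n + 5)
  have h : x3 * (A * x1 * x5 + B * x2 * x4) + x0 * x4 * x5 + x1 * x2 * x6 = 0 := hrec n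
  have hD : x1 * x2 ^ 2 * x3 ^ 2 * x4 ^ 2 * x5 ≠ 0 := by
    exact mul_ne_zero (mul_ne_zero (mul_ne_zero (mul_ne_zero h1 (pow_ne_zero 2 h2))
      (pow_ne_zero 2 h3)) (pow_ne_zero 2 h4)) h5
  have e1 : triBSQIntJ A B x (n + 1) * (x1 * x2 ^ 2 * x3 ^ 2 * x4 ^ 2 * x5) =
      x1 * x2 * x3 ^ 2 * x4 ^ 2 * (B * x3 * x4 + x1 * x6)
        - x1 * x2 ^ 2 * x4 ^ 2 * x5 * (A * x2 * x4 + x1 * x5)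
        - x1 * x2 ^ 2 * x3 ^ 2 * x5 * (A * x3 * x5 + x2 * x6) := by
    show ((B * x3 * x4 + x1 * x6) / (x2 * x5) - (A * x2 * x4 + x1 * x5) / x3 ^ 2 -
        (A * x3 * x5 + x2 * x6) / x4 ^ 2) * _ = _
    field_simp
  have e0 : triBSQIntJ A B x n * (x1 * x2 ^ 2 * x3 ^ 2 * x4 ^ 2 * x5) =
      x2 ^ 2 * x3 ^ 2 * x4 * x5 * (B * x2 * x3 + x0 * x5)
        - x1 * x3 ^ 2 * x4 ^ 2 * x5 * (A * x1 * x3 + x0 * x4)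
        - x1 * x2 ^ 2 * x4 ^ 2 * x5 * (A * x2 * x4 + x1 * x5) := by
    show ((B * x2 * x3 + x0 * x5) / (x1 * x4) - (A * x1 * x3 + x0 * x4) / x2 ^ 2 -
        (A * x2 * x4 + x1 * x5) / x3 ^ 2) * _ = _
    field_simp
  have key : triBSQIntJ A B x (n + 1) * (x1 * x2 ^ 2 * x3 ^ 2 * x4 ^ 2 * x5) =
      triBSQIntJ A B x n * (x1 * x2 ^ 2 * x3 ^ 2 * x4 ^ 2 * x5) := by
    rw [e1, e0]
    linear_combination (x3 ^ 2 * (x1 * x4 ^ 2 - x2 ^ 2 * x5)) * h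
  exact mul_right_cancel₀ hD key
end

section
/- Let F be a field, let A, B ∈ F, and let (y_n)_{n≥0} be a sequence of nonzero elements of F satisfying y_{n+1}·y_{n+2}²·y_{n+3}²·y_{n+4} = −(y_n·y_{n+1}²·y_{n+2}²·y_{n+3} + A·y_{n+1}·y_{n+2}·y_{n+3} + B) for all n ≥ 0. Define H1(w1, w2, w3, w4) := (A² + B)·w1·w2²·w3²·w4 + A·B·w2·w3·(w1 + w4) + A·w1·w2³·w3³·w4·(w1 + w4) + (w1·w2²·w3²·w4)² and H2(w1, w2, w3, w4) := A·(w2 + w3) − B/(w2·w3) + w2·w3·(w1·w2 − w1·w4 + w3·w4). Then both H1 and H2 are invariants of the map: H1(y_{n+1}, y_{n+2}, y_{n+3}, y_{n+4}) = H1(y_n, y_{n+1}, y_{n+2}, y_{n+3}) and H2(y_{n+1}, y_{n+2}, y_{n+3}, y_{n+4}) = H2(y_n, y_{n+1}, y_{n+2}, y_{n+3}) for all n ≥ 0. -/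
/-- The first (polynomial) integral `H1` of the fourth-order map (del). -/
def quadMapH1 {F : Type*} [Field F] (A B : F) (w1 w2 w3 w4 : F) : F :=
  (A ^ 2 + B) * w1 * w2 ^ 2 * w3 ^ 2 * w4 + A * B * w2 * w3 * (w1 + w4) +
    A * w1 * w2 ^ 3 * w3 ^ 3 * w4 * (w1 + w4) + (w1 * w2 ^ 2 * w3 ^ 2 * w4) ^ 2

/-- The second integral `H2` of the fourth-order map (del). -/
noncomputable def quadMapH2 {F : Type*} [Field F] (A B : F) (w1 w2 w3 w4 : F) : F :=
  A * (w2 + w3) - B / (w2 * w3) + w2 * w3 * (w1 * w2 - w1 * w4 + w3 * w4)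

/-!
Both invariances are identities modulo the recurrence: writing `R = 0` for the relation
`b c² d² e + a b² c² d + A b c d + B = 0`, the difference `H1(b,c,d,e) - H1(a,b,c,d)` equals
`((A c d + b c² d²) e - a b c (A + b c d)) R`, and `b c d (H2(b,c,d,e) - H2(a,b,c,d)) = (d - b) R`.
-/

section Step

variable {F : Type*} [Field F] (A B : F) {a b c d e : F}

theorem quadMapH1_step
    (hrec : b * c ^ 2 * d ^ 2 * e = -(a * b ^ 2 * c ^ 2 * d + A * b * c * d + B)) :
    quadMapH1 A B b c d e = quadMapH1 A B a b c d := by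
  unfold quadMapH1
  linear_combination ((A * c * d + b * c ^ 2 * d ^ 2) * e - a * b * c * (A + b * c * d)) * hrec

theorem quadMapH2_step (hb : b ≠ 0) (hc : c ≠ 0) (hd : d ≠ 0)
    (hrec : b * c ^ 2 * d ^ 2 * e = -(a * b ^ 2 * c ^ 2 * d + A * b * c * d + B)) :
    quadMapH2 A B b c d e = quadMapH2 A B a b c d := by
  unfold quadMapH2
  field_simp
  linear_combination (d - b) * hrec

end Step

/-- for any nonvanishing solution of the fourth-order recurrence
`y (n+1) y (n+2)² y (n+3)² y (n+4)
= -(y n y (n+1)² y (n+2)² y (n+3) + A y (n+1) y (n+2) y (n+3) + B)`,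
both `H1` and `H2` are invariants. -/
theorem stmt_18 {F : Type*} [Field F] (A B : F) (y : ℕ → F)
    (hne : ∀ n : ℕ, y n ≠ 0)
    (hrec : ∀ n : ℕ,
      y (n + 1) * y (n + 2) ^ 2 * y (n + 3) ^ 2 * y (n + 4) =
        -(y n * y (n + 1) ^ 2 * y (n + 2) ^ 2 * y (n + 3) +
            A * y (n + 1) * y (n + 2) * y (n + 3) + B)) :
    ∀ n : ℕ,
      quadMapH1 A B (y (n + 1)) (y (n + 2)) (y (n + 3)) (y (n + 4)) =
          quadMapH1 A B (y n) (y (n + 1)) (y (n + 2)) (y (n + 3)) ∧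
      quadMapH2 A B (y (n + 1)) (y (n + 2)) (y (n + 3)) (y (n + 4)) =
          quadMapH2 A B (y n) (y (n + 1)) (y (n + 2)) (y (n + 3)) :=
  fun n => ⟨quadMapH1_step A B (hrec n),
    quadMapH2_step A B (hne (n + 1)) (hne (n + 2)) (hne (n + 3)) (hrec n)⟩
end

section
/- Let F be a field, let a, b, c, d ∈ F be nonzero, and let x, y, z : ℤ → F be nowhere-vanishing sequences satisfying, for all n ∈ ℤ, the three bilinear relations a·x_{n+2}·y_{n+1} + b·x_n·y_{n+3} = (a+b)·x_{n+3}·y_n, a·y_{n+2}·z_{n+2} + d·y_n·z_{n+4} = (a+d)·y_{n+3}·z_{n+1}, and a·x_{n+2}·z_{n+3} + c·x_{n+4}·z_{n+1} = (a+c)·x_{n+1}·z_{n+4}. Then for all n ∈ ℤ: a²·(x_{n−2}·x_{n−1}·y_n·y_{n−3} − x_n·x_{n−3}·y_{n−2}·y_{n−1}) + (a+d)·(a+c)·(x_n·x_{n−4}·y_n·y_{n−2} − x_{n−3}·x_{n−1}·y_{n−3}·y_{n+1}) + c·d·(x_{n−3}·x_{n+2}·y_{n−3}·y_{n−2} − x_n·x_{n−1}·y_n·y_{n−5})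 = 0. -/
/-- nowhere-vanishing sequences `x, y, z : ℤ → F` satisfying the three
bilinear relations of the (2,1)-reduced higher Gel'fand-Dikii system with nonzero
parameters `a, b, c, d` satisfy the six-term relation (the reduction of eq. (vfvf)):
`a² (x_{n-2} x_{n-1} y_n y_{n-3} - x_n x_{n-3} y_{n-2} y_{n-1})
+ (a+d)(a+c) (x_n x_{n-4} y_n y_{n-2} - x_{n-3} x_{n-1} y_{n-3} y_{n+1})
+ cd (x_{n-3} x_{n+2} y_{n-3} y_{n-2} - x_n x_{n-1} y_n y_{n-5}) = 0`. -/
theorem stmt_19 {F : Type*} [Field F] (a b c d : F)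
    (ha : a ≠ 0) (hb : b ≠ 0) (hc : c ≠ 0) (hd : d ≠ 0)
    (x y z : ℤ → F)
    (hx : ∀ n : ℤ, x n ≠ 0) (hy : ∀ n : ℤ, y n ≠ 0) (hz : ∀ n : ℤ, z n ≠ 0)
    (h1 : ∀ n : ℤ, a * x (n + 2) * y (n + 1) + b * x n * y (n + 3) = (a + b) * x (n + 3) * y n)
    (h2 : ∀ n : ℤ,
      a * y (n + 2) * z (n + 2) + d * y n * z (n + 4) = (a + d) * y (n + 3) * z (n + 1))
    (h3 : ∀ n : ℤ,
      a * x (n + 2) * z (n + 3) + c * x (n + 4) * z (n + 1) = (a + c) * x (n + 1) * z (n + 4)) :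
    ∀ n : ℤ,
      a ^ 2 * (x (n - 2) * x (n - 1) * y n * y (n - 3) -
          x n * x (n - 3) * y (n - 2) * y (n - 1)) +
        (a + d) * (a + c) * (x n * x (n - 4) * y n * y (n - 2) -
          x (n - 3) * x (n - 1) * y (n - 3) * y (n + 1)) +
        c * d * (x (n - 3) * x (n + 2) * y (n - 3) * y (n - 2) -
          x n * x (n - 1) * y n * y (n - 5)) = 0 := by
  intro n
  have A := h2 (n - 5)
  rw [show n - 5 + 2 = n - 3 from by ring, show n - 5 + 4 = n - 1 from by ring,
      show n - 5 + 3 = n - 2 from by ring, show n - 5 + 1 = n - 4 from by ring] at A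
  have B := h2 (n - 3)
  rw [show n - 3 + 2 = n - 1 from by ring, show n - 3 + 4 = n + 1 from by ring,
      show n - 3 + 3 = n from by ring, show n - 3 + 1 = n - 2 from by ring] at B
  have C := h2 (n - 2)
  rw [show n - 2 + 2 = n from by ring, show n - 2 + 4 = n + 2 from by ring,
      show n - 2 + 3 = n + 1 from by ring, show n - 2 + 1 = n - 1 from by ring] at C
  have D := h3 (n - 5)
  rw [show n - 5 + 2 = n - 3 from by ring, show n - 5 + 3 = n - 2 from by ring,
      show n - 5 + 4 = n - 1 from by ring, show n - 5 + 1 = n - 4 from by ring] at D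
  have E := h3 (n - 4)
  rw [show n - 4 + 2 = n - 2 from by ring, show n - 4 + 3 = n - 1 from by ring,
      show n - 4 + 4 = n from by ring, show n - 4 + 1 = n - 3 from by ring] at E
  have G := h3 (n - 2)
  rw [show n - 2 + 2 = n from by ring, show n - 2 + 3 = n + 1 from by ring,
      show n - 2 + 4 = n + 2 from by ring, show n - 2 + 1 = n - 1 from by ring] at G
  have key :
      (a ^ 2 * (x (n - 2) * x (n - 1) * y n * y (n - 3) -
          x n * x (n - 3) * y (n - 2) * y (n - 1)) +
        (a + d) * (a + c) * (x n * x (n - 4) * y n * y (n - 2) -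
          x (n - 3) * x (n - 1) * y (n - 3) * y (n + 1)) +
        c * d * (x (n - 3) * x (n + 2) * y (n - 3) * y (n - 2) -
          x n * x (n - 1) * y n * y (n - 5))) * z (n - 1) = 0 := by
    linear_combination (-(c * x (n - 1) * x n * y n)) * A +
      (-(a * x (n - 3) * x n * y (n - 2))) * B +
      ((a + c) * x (n - 3) * x (n - 1) * y (n - 3)) * C +
      (-((a + d) * x n * y (n - 2) * y n)) * D +
      (a * x (n - 1) * y (n - 3) * y n) * E +
      (d * x (n - 3) * y (n - 3) * y (n - 2)) * G
  exact (mul_eq_zero.mp key).resolve_right (hz (n - 1))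
end
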